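/- For all nonzero integers m and all positive integers n, the sum over k from 1 to n of m^k * ((m-256)k^3 - 128k^2 + 16k + 8) / ((2k+1)(4k+1) * k^3 * C(2k,k)^2 * C(4k,2k)) equals m^{n+1} / ((2n+1)(4n+1) * C(2n,n)^2 * C(4n,2n)) - m. -/

import Mathlib

/-!
With `D k = (2k+1)(4k+1) C(2k,k)^2 C(4k,2k)` the sum telescopes: its `k`-th term is
`m^(k+1)/D k - m^k/D (k-1)`. Three applications of `(j+1) C(2j+2,j+1) = 2(2j+1) C(2j,j)` give
`(k+1)^3 D (k+1) = 8(2k+3)(4k+3)(4k+5) D k`, and `8(2j+1)(4j-1)(4j+1) = 256j^3 + 128j^2 - 16j - 8`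
is exactly the polynomial in the numerator.
-/

open Nat Finset

theorem succ_cube_mul_centralBinom_sq_mul_centralBinom_two_mul (k : ℕ) :
    (k + 1) ^ 3 * centralBinom (k + 1) ^ 2 * centralBinom (2 * (k + 1)) =
      8 * (2 * k + 1) * (4 * k + 1) * (4 * k + 3) * centralBinom k ^ 2 * centralBinom (2 * k) := by
  have hk := succ_mul_centralBinom_succ k
  have h2k := succ_mul_centralBinom_succ (2 * k)
  have h2k1 := succ_mul_centralBinom_succ (2 * k + 1)
  rw [show 2 * (k + 1) = 2 * k + 1 + 1 by ring]
  linear_combination (k + 1) * centralBinom (2 * k + 1 + 1) * ((k + 1) * centralBinom (k + 1)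
    + 2 * (2 * k + 1) * centralBinom k) * hk + 2 * (2 * k + 1) ^ 2 * centralBinom k ^ 2 * h2k1
    + 4 * (2 * k + 1) * (4 * k + 3) * centralBinom k ^ 2 * h2k

theorem choose_four_mul_two_mul (k : ℕ) : (4 * k).choose (2 * k) = centralBinom (2 * k) := by
  rw [centralBinom_eq_two_mul_choose, ← mul_assoc]; rfl

def binomDenom (k : ℕ) : ℕ :=
  (2 * k + 1) * (4 * k + 1) * (2 * k).choose k ^ 2 * (4 * k).choose (2 * k)

theorem binomDenom_pos (k : ℕ) : 0 < binomDenom k := by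
  rw [binomDenom, choose_four_mul_two_mul, ← centralBinom_eq_two_mul_choose]
  have := centralBinom_pos k
  have := centralBinom_pos (2 * k)
  positivity

theorem succ_cube_mul_binomDenom_succ (k : ℕ) :
    (k + 1) ^ 3 * binomDenom (k + 1) = 8 * (2 * k + 3) * (4 * k + 3) * (4 * k + 5) * binomDenom k := by
  simp only [binomDenom, choose_four_mul_two_mul, ← centralBinom_eq_two_mul_choose]
  linear_combination (2 * k + 3) * (4 * k + 5) *
    succ_cube_mul_centralBinom_sq_mul_centralBinom_two_mul k

section

variable {K : Type*} [Field K] [CharZero K]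

def binomTerm (m : K) (k : ℕ) : K := m ^ (k + 1) / binomDenom k

theorem binomTerm_succ_sub (m : K) (k : ℕ) :
    binomTerm m (k + 1) - binomTerm m k =
      m ^ (k + 1) * ((m - 256) * (k + 1) ^ 3 - 128 * (k + 1) ^ 2 + 16 * (k + 1) + 8) /
        ((k + 1) ^ 3 * binomDenom (k + 1)) := by
  have hD : ∀ j, (binomDenom j : K) ≠ 0 := fun j => Nat.cast_ne_zero.mpr (binomDenom_pos j).ne'
  have hk : (k + 1 : K) ≠ 0 := Nat.cast_add_one_ne_zero k
  have key : ((k + 1) ^ 3 * binomDenom (k + 1) : K) =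
      8 * (2 * k + 3) * (4 * k + 3) * (4 * k + 5) * binomDenom k := by
    exact_mod_cast succ_cube_mul_binomDenom_succ k
  unfold binomTerm
  rw [div_sub_div _ _ (hD _) (hD _), div_eq_div_iff (mul_ne_zero (hD _) (hD _))
    (mul_ne_zero (pow_ne_zero 3 hk) (hD _))]
  linear_combination -(m ^ (k + 1) * binomDenom (k + 1)) * key

theorem sum_Icc_one_eq_binomTerm_sub (m : K) (n : ℕ) :
    ∑ k ∈ Icc 1 n,
      m ^ k * ((m - 256) * k ^ 3 - 128 * k ^ 2 + 16 * k + 8) /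
        ((2 * (k : K) + 1) * (4 * (k : K) + 1) * (k : K) ^ 3 *
          ((2 * k).choose k : K) ^ 2 * ((4 * k).choose (2 * k) : K)) = binomTerm m n - m := by
  induction n with
  | zero => simp [binomTerm, binomDenom]
  | succ n ih =>
    have step := binomTerm_succ_sub m n
    rw [sum_Icc_succ_top (by omega), ih]
    push_cast [binomDenom] at step ⊢
    linear_combination -step

end

theorem stmt_9_general (m : ℤ) (n : ℕ) :
    ∑ k ∈ Finset.Icc 1 n,
      ((m : ℚ) ^ k * (((m : ℚ) - 256) * k ^ 3 - 128 * k ^ 2 + 16 * k + 8)) /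
        ((2 * (k : ℚ) + 1) * (4 * (k : ℚ) + 1) * (k : ℚ) ^ 3 *
          ((2 * k).choose k : ℚ) ^ 2 * ((4 * k).choose (2 * k) : ℚ))
      = (m : ℚ) ^ (n + 1) /
          ((2 * (n : ℚ) + 1) * (4 * (n : ℚ) + 1) * ((2 * n).choose n : ℚ) ^ 2 *
            ((4 * n).choose (2 * n) : ℚ)) - (m : ℚ) := by
  rw [sum_Icc_one_eq_binomTerm_sub, binomTerm, binomDenom]
  push_cast
  rfl

theorem stmt_9 (m : ℤ) (hm : m ≠ 0) (n : ℕ) (hn : 1 ≤ n) :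
    ∑ k ∈ Finset.Icc 1 n,
      ((m : ℚ) ^ k * (((m : ℚ) - 256) * k ^ 3 - 128 * k ^ 2 + 16 * k + 8)) /
        ((2 * (k : ℚ) + 1) * (4 * (k : ℚ) + 1) * (k : ℚ) ^ 3 *
          ((2 * k).choose k : ℚ) ^ 2 * ((4 * k).choose (2 * k) : ℚ))
      = (m : ℚ) ^ (n + 1) /
          ((2 * (n : ℚ) + 1) * (4 * (n : ℚ) + 1) * ((2 * n).choose n : ℚ) ^ 2 *
            ((4 * n).choose (2 * n) : ℚ)) - (m : ℚ) :=
  stmt_9_general m n
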